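/- Let (X,μ,S,T) be an ergodic measure preserving system with commuting transformations S and T. Then the factor of X associated with the σ-algebra I_S ∨ I_T is isomorphic (as a measure preserving system) to a product of two ergodic systems: the map A ∩ B ↦ A × B (for A ∈ I_T, B ∈ I_S) induces a measure-preserving isomorphism between (X, I_T ∨ I_S, μ, S, T) and (X × X, I_T ⊗ I_S, μ ⊗ μ, S × id, id × T). -/

import Mathlib

open MeasureTheory

/-- The σ-algebra of `R`-invariant measurable sets. -/
def invSigma {X : Type*} [MeasurableSpace X] (R : X → X) : MeasurableSpace X where
  MeasurableSet' s := MeasurableSet s ∧ R ⁻¹' s = s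
  measurableSet_empty := ⟨MeasurableSet.empty, rfl⟩
  measurableSet_compl s hs := ⟨hs.1.compl, by rw [Set.preimage_compl, hs.2]⟩
  measurableSet_iUnion f hf := ⟨MeasurableSet.iUnion fun i => (hf i).1, by
    rw [Set.preimage_iUnion]; exact Set.iUnion_congr fun i => (hf i).2⟩

/-!
For `A ∈ I_T`, the measure `B ↦ μ (A ∩ B)` on the factor `(X, I_S)` is `T`-invariant and
absolutely continuous with respect to `μ`. On that factor `T` is ergodic (an `S`- and
`T`-invariant set is trivial), so this measure is `μ A • μ`: the σ-algebras `I_T` and `I_S` are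
independent. Independence is exactly what makes the diagonal `x ↦ (x, x)` carry `μ` on
`I_T ∨ I_S` to `μ ⊗ μ` on `I_T ⊗ I_S`, and equivariance holds because every set of `I_T ⊗ I_S`
is invariant under both `T × id` and `id × S`.
-/

open Set ProbabilityTheory

section
variable {X : Type*}

lemma invSigma_le [m0 : MeasurableSpace X] (R : X → X) : invSigma R ≤ m0 := fun _ hs => hs.1

lemma Function.Commute.measurable_invSigma [MeasurableSpace X] {R S : X → X} (hR : Measurable R)
    (h : Function.Commute S R) : Measurable[invSigma S, invSigma S] R := by
  rintro s ⟨hs, hSs⟩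
  refine ⟨hR hs, ?_⟩
  rw [← preimage_comp, ← h.comp_eq, preimage_comp, hSs]

lemma MeasureTheory.MeasurePreserving.trim {m m0 : MeasurableSpace X} {μ ν : Measure X}
    (hm : m ≤ m0) {R : X → X} (hRm : Measurable[m, m] R) (hR : MeasurePreserving R μ ν) :
    @MeasurePreserving X X m m R (μ.trim hm) (ν.trim hm) := by
  refine @MeasurePreserving.mk X X m m _ _ _ hRm (@Measure.ext _ m _ _ fun s hs => ?_)
  rw [Measure.map_apply hRm hs, trim_measurableSet_eq hm hs, trim_measurableSet_eq hm (hRm hs),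
    hR.measure_preimage (hm s hs).nullMeasurableSet]

lemma ergodic_trim_invSigma [MeasurableSpace X] {μ : Measure X} [IsProbabilityMeasure μ]
    {S T : X → X} (hT : MeasurePreserving T μ μ) (hcomm : Function.Commute S T)
    (herg : ∀ s, MeasurableSet s → S ⁻¹' s = s → T ⁻¹' s = s → μ s = 0 ∨ μ s = 1) :
    Ergodic T (μ.trim (invSigma_le S)) := by
  refine ⟨hT.trim _ (hcomm.measurable_invSigma hT.measurable), ⟨fun s hs hTs => ?_⟩⟩
  rw [Filter.eventuallyConst_set', ae_eq_empty, ae_eq_univ, trim_measurableSet_eq _ hs,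
    trim_measurableSet_eq _ hs.compl, prob_compl_eq_zero_iff hs.1]
  exact herg s hs.1 hs.2 hTs

lemma indep_invSigma_of_ergodic_trim {m m0 : MeasurableSpace X} {μ : Measure X}
    [IsProbabilityMeasure μ] {R : X → X} (hm : m ≤ m0) (hR : MeasurePreserving R μ μ)
    (herg : Ergodic R (μ.trim hm)) : Indep (invSigma R) m μ := by
  refine (Indep_iff _ _ μ).2 fun A B hA hB => ?_
  -- `herg.measurable` would elaborate against the ambient σ-algebra `m0` rather than `m`
  obtain ⟨⟨hRm, -⟩, -⟩ := id herg
  have hRA := (hR.restrict_preimage hA.1).trim hm hRm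
  rw [hA.2] at hRA
  obtain ⟨c, hc⟩ := herg.eq_smul_of_absolutelyContinuous hRA
    (Measure.AbsolutelyContinuous.trim (Measure.restrict_le_self.absolutelyContinuous) hm)
  have hcA : μ A = c := by
    simpa [trim_measurableSet_eq hm MeasurableSet.univ] using congrArg (· univ) hc
  have hcB := congrArg (· B) hc
  simp only [trim_measurableSet_eq hm hB, Measure.smul_apply, smul_eq_mul,
    Measure.restrict_apply (hm B hB)] at hcB
  rw [inter_comm, hcB, hcA]

lemma measure_preimage_diag_of_indep {m₁ m₂ m0 : MeasurableSpace X} {μ : Measure X}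
    [IsProbabilityMeasure μ] (h₁ : m₁ ≤ m0) (h₂ : m₂ ≤ m0) (hind : Indep m₁ m₂ μ)
    {C : Set (X × X)} (hC : MeasurableSet[m₁.prod m₂] C) :
    μ ((fun x => (x, x)) ⁻¹' C) = μ.prod μ C := by
  have hle : m₁.prod m₂ ≤ m0.prod m0 :=
    sup_le_sup (MeasurableSpace.comap_mono h₁) (MeasurableSpace.comap_mono h₂)
  have hdiag : Measurable (fun x : X => (x, x)) := measurable_id.prodMk measurable_id
  induction C, hC using MeasurableSpace.induction_on_inter
    (@generateFrom_prod X X m₁ m₂).symm (@isPiSystem_prod X X m₁ m₂) with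
  | empty => simp
  | basic C hC =>
    obtain ⟨A, hA, B, hB, rfl⟩ := hC
    rw [Measure.prod_prod]
    exact (Indep_iff _ _ μ).1 hind A B hA hB
  | compl C hC ih =>
    rw [preimage_compl, prob_compl_eq_one_sub (hdiag (hle C hC)),
      prob_compl_eq_one_sub (hle C hC), ih]
  | iUnion C hdisj hC ih =>
    rw [preimage_iUnion, measure_iUnion (hdisj.mono fun i j h => h.preimage _)
      (fun i => hdiag (hle _ (hC i))), measure_iUnion hdisj (fun i => hle _ (hC i))]
    exact tsum_congr ih

end

lemma comap_diag_prod {X : Type*} (m₁ m₂ : MeasurableSpace X) :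
    (m₁.prod m₂).comap (fun x => (x, x)) = m₁ ⊔ m₂ :=
  (MeasurableSpace.comap_prodMk id id).trans <| by
    rw [MeasurableSpace.comap_id, MeasurableSpace.comap_id]

lemma preimage_prodMap_eq_of_measurableSet {α β : Type*} {m₁ : MeasurableSpace α}
    {m₂ : MeasurableSpace β} {R₁ : α → α} {R₂ : β → β}
    (h₁ : ∀ s, MeasurableSet s → R₁ ⁻¹' s = s) (h₂ : ∀ s, MeasurableSet s → R₂ ⁻¹' s = s)
    {C : Set (α × β)} (hC : MeasurableSet C) : Prod.map R₁ R₂ ⁻¹' C = C := by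
  suffices m₁.prod m₂ ≤ invSigma (Prod.map R₁ R₂) from (this C hC).2
  refine sup_le ?_ ?_ <;> rw [MeasurableSpace.comap_le_iff_le_map]
  · exact fun s hs => ⟨measurable_fst hs, congrArg (Prod.fst ⁻¹' ·) (h₁ s hs)⟩
  · exact fun s hs => ⟨measurable_snd hs, congrArg (Prod.snd ⁻¹' ·) (h₂ s hs)⟩

lemma preimage_diag_preimage_prodMap_left {α : Type*} {R : α → α} {C : Set (α × α)}
    (hC : Prod.map id R ⁻¹' C = C) :
    (fun x => (x, x)) ⁻¹' (Prod.map R id ⁻¹' C) = R ⁻¹' ((fun x => (x, x)) ⁻¹' C) := by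
  ext x
  exact (Set.ext_iff.1 hC (R x, x)).symm

lemma preimage_diag_preimage_prodMap_right {α : Type*} {R : α → α} {C : Set (α × α)}
    (hC : Prod.map R id ⁻¹' C = C) :
    (fun x => (x, x)) ⁻¹' (Prod.map id R ⁻¹' C) = R ⁻¹' ((fun x => (x, x)) ⁻¹' C) := by
  ext x
  exact (Set.ext_iff.1 hC (x, R x)).symm

theorem factor_isomorphic_to_product_general {X : Type*} [MeasurableSpace X]
    (μ : Measure X) [IsProbabilityMeasure μ]
    (S T : X ≃ᵐ X) (hT : MeasurePreserving T μ μ)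
    (hcomm : ∀ x, S (T x) = T (S x))
    (herg : ∀ s : Set X, MeasurableSet s → ⇑S ⁻¹' s = s → ⇑T ⁻¹' s = s → μ s = 0 ∨ μ s = 1) :
    -- the set-level correspondence `C ↦ Δ⁻¹ C` is a bijection between
    -- `I_T ⊗ I_S` and `I_T ∨ I_S` (this encodes `A ∩ B ↦ A × B` on generators):
    MeasurableSpace.comap (fun x : X => (x, x)) ((invSigma ⇑T).prod (invSigma ⇑S)) =
      invSigma ⇑T ⊔ invSigma ⇑S ∧
    -- it is measure preserving from `(X, I_T ∨ I_S, μ)` to `(X², I_T ⊗ I_S, μ ⊗ μ)`: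
    (∀ C : Set (X × X), MeasurableSet[(invSigma ⇑T).prod (invSigma ⇑S)] C →
      μ ((fun x : X => (x, x)) ⁻¹' C) = μ.prod μ C) ∧
    -- it intertwines `S` with `S × id`:
    (∀ C : Set (X × X), MeasurableSet[(invSigma ⇑T).prod (invSigma ⇑S)] C →
      (fun x : X => (x, x)) ⁻¹' (Prod.map ⇑S id ⁻¹' C) =
        ⇑S ⁻¹' ((fun x : X => (x, x)) ⁻¹' C)) ∧
    -- it intertwines `T` with `id × T`:
    (∀ C : Set (X × X), MeasurableSet[(invSigma ⇑T).prod (invSigma ⇑S)] C →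
      (fun x : X => (x, x)) ⁻¹' (Prod.map id ⇑T ⁻¹' C) =
        ⇑T ⁻¹' ((fun x : X => (x, x)) ⁻¹' C)) ∧
    -- the two factor systems `(X, I_T, μ, S)` and `(X, I_S, μ, T)` are ergodic:
    (∀ A : Set X, MeasurableSet[invSigma ⇑T] A → ⇑S ⁻¹' A = A → μ A = 0 ∨ μ A = 1) ∧
    (∀ B : Set X, MeasurableSet[invSigma ⇑S] B → ⇑T ⁻¹' B = B → μ B = 0 ∨ μ B = 1) := by
  have hind : Indep (invSigma ⇑T) (invSigma ⇑S) μ :=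
    indep_invSigma_of_ergodic_trim (invSigma_le _) hT (ergodic_trim_invSigma hT hcomm herg)
  have hC_T : ∀ C, MeasurableSet[(invSigma ⇑T).prod (invSigma ⇑S)] C → Prod.map T id ⁻¹' C = C :=
    fun _ => preimage_prodMap_eq_of_measurableSet (m₁ := invSigma T) (fun _ hs => hs.2)
      fun _ _ => rfl
  have hC_S : ∀ C, MeasurableSet[(invSigma ⇑T).prod (invSigma ⇑S)] C → Prod.map id S ⁻¹' C = C :=
    fun _ => preimage_prodMap_eq_of_measurableSet (m₂ := invSigma S) (fun _ _ => rfl)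
      fun _ hs => hs.2
  refine ⟨comap_diag_prod _ _,
    fun _ hC => measure_preimage_diag_of_indep (invSigma_le _) (invSigma_le _) hind hC,
    fun C hC => preimage_diag_preimage_prodMap_left (hC_S C hC),
    fun C hC => preimage_diag_preimage_prodMap_right (hC_T C hC),
    fun A hA hAS => herg A hA.1 hAS hA.2, fun B hB hBT => herg B hB.1 hB.2 hBT⟩

/-- the factor of an ergodic system `(X,μ,S,T)` associated with `I_T ∨ I_S`
is isomorphic to a product of two ergodic systems: the correspondence `A ∩ B ↦ A × B` is
realized at the level of points by the diagonal map `Δ x = (x,x)`, which identifies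
`(X, I_T ∨ I_S, μ, S, T)` with `(X × X, I_T ⊗ I_S, μ ⊗ μ, S × id, id × T)` in a
measure-preserving, equivariant way, and the two coordinate systems are ergodic. -/
theorem factor_isomorphic_to_product {X : Type*} [MeasurableSpace X]
    (μ : Measure X) [IsProbabilityMeasure μ]
    (S T : X ≃ᵐ X) (hS : MeasurePreserving S μ μ) (hT : MeasurePreserving T μ μ)
    (hcomm : ∀ x, S (T x) = T (S x))
    (herg : ∀ s : Set X, MeasurableSet s → ⇑S ⁻¹' s = s → ⇑T ⁻¹' s = s → μ s = 0 ∨ μ s = 1) :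
    -- the set-level correspondence `C ↦ Δ⁻¹ C` is a bijection between
    -- `I_T ⊗ I_S` and `I_T ∨ I_S` (this encodes `A ∩ B ↦ A × B` on generators):
    MeasurableSpace.comap (fun x : X => (x, x)) ((invSigma ⇑T).prod (invSigma ⇑S)) =
      invSigma ⇑T ⊔ invSigma ⇑S ∧
    -- it is measure preserving from `(X, I_T ∨ I_S, μ)` to `(X², I_T ⊗ I_S, μ ⊗ μ)`:
    (∀ C : Set (X × X), MeasurableSet[(invSigma ⇑T).prod (invSigma ⇑S)] C →
      μ ((fun x : X => (x, x)) ⁻¹' C) = μ.prod μ C) ∧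
    -- it intertwines `S` with `S × id`:
    (∀ C : Set (X × X), MeasurableSet[(invSigma ⇑T).prod (invSigma ⇑S)] C →
      (fun x : X => (x, x)) ⁻¹' (Prod.map ⇑S id ⁻¹' C) =
        ⇑S ⁻¹' ((fun x : X => (x, x)) ⁻¹' C)) ∧
    -- it intertwines `T` with `id × T`:
    (∀ C : Set (X × X), MeasurableSet[(invSigma ⇑T).prod (invSigma ⇑S)] C →
      (fun x : X => (x, x)) ⁻¹' (Prod.map id ⇑T ⁻¹' C) =
        ⇑T ⁻¹' ((fun x : X => (x, x)) ⁻¹' C)) ∧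
    -- the two factor systems `(X, I_T, μ, S)` and `(X, I_S, μ, T)` are ergodic:
    (∀ A : Set X, MeasurableSet[invSigma ⇑T] A → ⇑S ⁻¹' A = A → μ A = 0 ∨ μ A = 1) ∧
    (∀ B : Set X, MeasurableSet[invSigma ⇑S] B → ⇑T ⁻¹' B = B → μ B = 0 ∨ μ B = 1) :=
  factor_isomorphic_to_product_general μ S T hT hcomm herg
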